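/- Let K ∈ ℝ, N ∈ (1,∞), and let h be a CD(K,N) density on an interval (a,b), not identically zero (hence strictly positive on (a,b)). Let 0 < ε < (b−a)/2 and let ψ_ε be a nonnegative C²-smooth function on ℝ supported in [−ε,ε] with ∫ψ_ε = 1. Define h^ε on (a+ε, b−ε) by log h^ε(x) := ∫ log h(y)·ψ_ε(x−y) dy. Then h^ε is C²-smooth and is a CD(K,N) density on (a+ε, b−ε). -/

import Mathlib

/-- The distortion coefficients `σ^{(t)}_{K,𝒩}(θ)`, valued in `[0,∞]`
(the value is `+∞` when `K > 0` and `θ·√(K/𝒩) ≥ π`). -/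
noncomputable def sigmaCoeff (K Np t θ : ℝ) : ENNReal :=
  if θ = 0 then ENNReal.ofReal t
  else if 0 < K then
    if θ * Real.sqrt (K / Np) < Real.pi then
      ENNReal.ofReal (Real.sin (t * (θ * Real.sqrt (K / Np))) / Real.sin (θ * Real.sqrt (K / Np)))
    else ⊤
  else if K = 0 then ENNReal.ofReal t
  else
    ENNReal.ofReal
      (Real.sinh (t * (θ * Real.sqrt (-K / Np))) / Real.sinh (θ * Real.sqrt (-K / Np)))

/-- `h` is a `CD(K,N)` density on the (interval) `I ⊆ ℝ`: it is nonnegative on `I` and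
`h(t·x₁+(1-t)·x₀)^{1/(N-1)} ≥ σ^{(t)}_{K,N-1}(|x₁-x₀|)·h(x₁)^{1/(N-1)}
  + σ^{(1-t)}_{K,N-1}(|x₁-x₀|)·h(x₀)^{1/(N-1)}` for all `x₀,x₁ ∈ I`, `t ∈ [0,1]`. -/
def IsCDDensity (K N : ℝ) (h : ℝ → ℝ) (I : Set ℝ) : Prop :=
  (∀ x ∈ I, 0 ≤ h x) ∧
  ∀ x₀ ∈ I, ∀ x₁ ∈ I, ∀ t ∈ Set.Icc (0:ℝ) 1,
    sigmaCoeff K (N - 1) t |x₁ - x₀| * ENNReal.ofReal (h x₁ ^ (1 / (N - 1)))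
        + sigmaCoeff K (N - 1) (1 - t) |x₁ - x₀| * ENNReal.ofReal (h x₀ ^ (1 / (N - 1)))
      ≤ ENNReal.ofReal (h (t * x₁ + (1 - t) * x₀) ^ (1 / (N - 1)))

/-!
A `CD(K,N)` density that is positive at one point is positive on the whole interval, and for
`K > 0` the interval is shorter than `π √((N-1)/K)`, so all distortion coefficients involved are
finite. The bound `σ^{(t)}(θ) ≥ 1 - (1-t) cosh(Θ √(|K|/(N-1)))` squeezes `h^{1/(N-1)}` near each
point between two continuous functions, so `log h` is continuous and its convolution with `ψ` is
`C²`.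

For the curvature-dimension inequality of `h^ε`, shift the three points `x₀, x₁, x_t` by the same
`z ∈ supp ψ`; this gives `σ_t e^{u(z)} + σ_{1-t} e^{v(z)} ≤ e^{w(z)}` with `u, v, w` the functions
`p log h(· - z)`, `p = 1/(N-1)`. Jensen's inequality for the convex function
`(u, v) ↦ log (σ eᵘ + τ eᵛ)` and the probability density `ψ` carries it over to the averages.
-/

open Real Set Filter Function Metric Topology MeasureTheory

noncomputable def sigmaCoeffReal (K Np t θ : ℝ) : ℝ :=
  if θ = 0 then t
  else if 0 < K then sin (t * (θ * √(K / Np))) / sin (θ * √(K / Np))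
  else if K = 0 then t
  else sinh (t * (θ * √(-K / Np))) / sinh (θ * √(-K / Np))

section SigmaCoeffReal

variable {K Np t θ : ℝ}

lemma sigmaCoeff_eq_ofReal (hθ : 0 < K → θ * √(K / Np) < π) :
    sigmaCoeff K Np t θ = ENNReal.ofReal (sigmaCoeffReal K Np t θ) := by
  unfold sigmaCoeff sigmaCoeffReal
  split_ifs with h₀ hK hπ <;> first | rfl | exact absurd (hθ hK) hπ

lemma sigmaCoeffReal_zero : sigmaCoeffReal K Np 0 θ = 0 := by
  unfold sigmaCoeffReal; split_ifs <;> simp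

lemma sigmaCoeffReal_one (hNp : 0 < Np) (hθ₀ : 0 ≤ θ) (hθ : 0 < K → θ * √(K / Np) < π) :
    sigmaCoeffReal K Np 1 θ = 1 := by
  unfold sigmaCoeffReal
  split_ifs with h₀ hK hK₀
  · rfl
  · have hφ : 0 < θ * √(K / Np) := by positivity
    rw [one_mul, div_self (sin_pos_of_pos_of_lt_pi hφ (hθ hK)).ne']
  · rfl
  · have hK' : 0 < -K := neg_pos.2 (lt_of_le_of_ne (not_lt.1 hK) hK₀)
    have hφ : 0 < θ * √(-K / Np) := by positivity
    rw [one_mul, div_self (sinh_pos_iff.2 hφ).ne']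

lemma sigmaCoeffReal_pos (hNp : 0 < Np) (ht₀ : 0 < t) (ht₁ : t ≤ 1) (hθ₀ : 0 ≤ θ)
    (hθ : 0 < K → θ * √(K / Np) < π) : 0 < sigmaCoeffReal K Np t θ := by
  unfold sigmaCoeffReal
  split_ifs with h₀ hK hK₀
  · exact ht₀
  · have hφ : 0 < θ * √(K / Np) := by positivity
    have hπ := hθ hK
    exact div_pos (sin_pos_of_pos_of_lt_pi (by positivity) (by nlinarith))
      (sin_pos_of_pos_of_lt_pi hφ hπ)
  · exact ht₀
  · have hK' : 0 < -K := neg_pos.2 (lt_of_le_of_ne (not_lt.1 hK) hK₀)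
    exact div_pos (sinh_pos_iff.2 (by positivity)) (sinh_pos_iff.2 (by positivity))

lemma sigmaCoeffReal_nonneg (hNp : 0 < Np) (ht₀ : 0 ≤ t) (ht₁ : t ≤ 1) (hθ₀ : 0 ≤ θ)
    (hθ : 0 < K → θ * √(K / Np) < π) : 0 ≤ sigmaCoeffReal K Np t θ := by
  rcases ht₀.eq_or_lt with rfl | ht₀
  · exact sigmaCoeffReal_zero.ge
  · exact (sigmaCoeffReal_pos hNp ht₀ ht₁ hθ₀ hθ).le

lemma sinh_sub_sinh_le {u v : ℝ} (hu : 0 ≤ u) (huv : u ≤ v) :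
    sinh v - sinh u ≤ cosh v * (v - u) := by
  refine (convex_Icc 0 v).image_sub_le_mul_sub_of_deriv_le continuous_sinh.continuousOn
    differentiable_sinh.differentiableOn (fun x hx => ?_) u ⟨hu, huv⟩ v ⟨hu.trans huv, le_rfl⟩ huv
  rw [interior_Icc] at hx
  rw [Real.deriv_sinh, cosh_le_cosh, abs_of_pos hx.1, abs_of_nonneg (hu.trans huv)]
  exact hx.2.le

/-- The coefficient tends to `1` as `t → 1`, uniformly for `θ ≤ Θ`. -/
lemma one_sub_mul_cosh_le_sigmaCoeffReal {Θ : ℝ} (hNp : 0 < Np) (ht₀ : 0 ≤ t) (ht₁ : t ≤ 1)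
    (hθ₀ : 0 ≤ θ) (hθΘ : θ ≤ Θ) (hθ : 0 < K → θ * √(K / Np) < π) :
    1 - (1 - t) * cosh (Θ * √(|K| / Np)) ≤ sigmaCoeffReal K Np t θ := by
  have hC : 1 ≤ cosh (Θ * √(|K| / Np)) := one_le_cosh _
  unfold sigmaCoeffReal
  split_ifs with h₀ hK hK₀
  · nlinarith
  · have hφ : 0 < θ * √(K / Np) := by positivity
    have hπ := hθ hK
    have hsin := sin_pos_of_pos_of_lt_pi hφ hπ
    -- concavity of `sin` on `[0, π]` gives `sin (t φ) ≥ t sin φ`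
    have hconc := strictConcaveOn_sin_Icc.concaveOn.2 (mem_Icc.2 ⟨hφ.le, hπ.le⟩)
      (left_mem_Icc.2 pi_pos.le) ht₀ (sub_nonneg.2 ht₁) (add_sub_cancel t 1)
    simp only [smul_eq_mul, mul_zero, add_zero, sin_zero] at hconc
    rw [le_div_iff₀ hsin]
    nlinarith [mul_nonneg (mul_nonneg (sub_nonneg.2 ht₁) (sub_nonneg.2 hC)) hsin.le]
  · nlinarith
  · have hK' : 0 < -K := neg_pos.2 (lt_of_le_of_ne (not_lt.1 hK) hK₀)
    set φ := θ * √(-K / Np)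
    have hφ : 0 < φ := by positivity
    have hφΘ : φ ≤ Θ * √(|K| / Np) := by
      rw [abs_of_neg (neg_pos.1 hK')]; exact mul_le_mul_of_nonneg_right hθΘ (sqrt_nonneg _)
    have hsinh := sinh_pos_iff.2 hφ
    have hmvt : sinh φ - sinh (t * φ) ≤ cosh φ * (φ - t * φ) :=
      sinh_sub_sinh_le (by positivity) (by nlinarith)
    have hcosh : cosh φ ≤ cosh (Θ * √(|K| / Np)) := by
      rw [cosh_le_cosh, abs_of_pos hφ, abs_of_pos (hφ.trans_le hφΘ)]; exact hφΘ
    have hmul : φ * cosh φ ≤ sinh φ * cosh (Θ * √(|K| / Np)) :=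
      mul_le_mul (self_le_sinh_iff.2 hφ.le) hcosh (cosh_pos φ).le hsinh.le
    rw [le_div_iff₀ hsinh]
    nlinarith [mul_le_mul_of_nonneg_left hmul (sub_nonneg.2 ht₁)]

lemma sigmaCoeff_mul_add_le_ofReal_iff (hNp : 0 < Np) (ht : t ∈ Icc (0 : ℝ) 1) (hθ₀ : 0 ≤ θ)
    (hθ : 0 < K → θ * √(K / Np) < π) {A B C : ℝ} (hA : 0 ≤ A) (hB : 0 ≤ B) (hC : 0 ≤ C) :
    sigmaCoeff K Np t θ * ENNReal.ofReal A + sigmaCoeff K Np (1 - t) θ * ENNReal.ofReal B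
        ≤ ENNReal.ofReal C ↔
      sigmaCoeffReal K Np t θ * A + sigmaCoeffReal K Np (1 - t) θ * B ≤ C := by
  have hσ := sigmaCoeffReal_nonneg hNp ht.1 ht.2 hθ₀ hθ
  have hτ := sigmaCoeffReal_nonneg hNp (sub_nonneg.2 ht.2) (sub_le_self 1 ht.1) hθ₀ hθ
  rw [sigmaCoeff_eq_ofReal hθ, sigmaCoeff_eq_ofReal hθ, ← ENNReal.ofReal_mul hσ,
    ← ENNReal.ofReal_mul hτ, ← ENNReal.ofReal_add (by positivity) (by positivity),
    ENNReal.ofReal_le_ofReal_iff hC]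

end SigmaCoeffReal

namespace IsCDDensity

variable {K N : ℝ} {h : ℝ → ℝ} {I : Set ℝ}

lemma mul_sqrt_lt_pi (hCD : IsCDDensity K N h I) {x₀ x₁ : ℝ} (hx₀ : x₀ ∈ I) (hx₁ : x₁ ∈ I)
    (hpos : 0 < h x₁) (hK : 0 < K) : |x₁ - x₀| * √(K / (N - 1)) < π := by
  by_contra! hπ
  have hθ : |x₁ - x₀| ≠ 0 := by
    rintro h₀
    rw [h₀, zero_mul] at hπ
    exact pi_pos.not_ge hπ
  -- at `t = 1` the coefficient of `h x₁` would be `⊤`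
  have hCD₁ := hCD.2 x₀ hx₀ x₁ hx₁ 1 (right_mem_Icc.2 zero_le_one)
  have htop : sigmaCoeff K (N - 1) 1 |x₁ - x₀| = ⊤ := by
    rw [sigmaCoeff, if_neg hθ, if_pos hK, if_neg hπ.not_gt]
  rw [htop, ENNReal.top_mul (by simpa using rpow_pos_of_pos hpos _), top_add] at hCD₁
  exact ENNReal.ofReal_ne_top (top_le_iff.1 hCD₁)

lemma sigmaCoeffReal_mul_add_le (hN : 1 < N) (hCD : IsCDDensity K N h I) {x₀ x₁ t : ℝ}
    (hx₀ : x₀ ∈ I) (hx₁ : x₁ ∈ I) (ht : t ∈ Icc (0 : ℝ) 1) (hm : t * x₁ + (1 - t) * x₀ ∈ I)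
    (hpos : 0 < h x₁) :
    sigmaCoeffReal K (N - 1) t |x₁ - x₀| * h x₁ ^ (1 / (N - 1))
        + sigmaCoeffReal K (N - 1) (1 - t) |x₁ - x₀| * h x₀ ^ (1 / (N - 1))
      ≤ h (t * x₁ + (1 - t) * x₀) ^ (1 / (N - 1)) :=
  (sigmaCoeff_mul_add_le_ofReal_iff (sub_pos.2 hN) ht (abs_nonneg _)
    (hCD.mul_sqrt_lt_pi hx₀ hx₁ hpos) (rpow_nonneg (hCD.1 x₁ hx₁) _)
    (rpow_nonneg (hCD.1 x₀ hx₀) _) (rpow_nonneg (hCD.1 _ hm) _)).1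
    (hCD.2 x₀ hx₀ x₁ hx₁ t ht)

lemma pos_of_mem_openSegment (hN : 1 < N) (hCD : IsCDDensity K N h I) {c y x : ℝ}
    (hc : c ∈ I) (hy : y ∈ I) (hcpos : 0 < h c) (hx : x ∈ openSegment ℝ c y) (hxI : x ∈ I) :
    0 < h x := by
  obtain ⟨α, β, hα, hβ, hαβ, rfl⟩ := hx
  obtain rfl : β = 1 - α := by linarith
  simp only [smul_eq_mul] at hxI ⊢
  have hineq := hCD.sigmaCoeffReal_mul_add_le hN hy hc ⟨hα.le, by linarith⟩ hxI hcpos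
  have hσ := sigmaCoeffReal_pos (K := K) (sub_pos.2 hN) hα (by linarith) (abs_nonneg (c - y))
    (hCD.mul_sqrt_lt_pi hy hc hcpos)
  have hτ := sigmaCoeffReal_nonneg (K := K) (sub_pos.2 hN) hβ.le (by linarith)
    (abs_nonneg (c - y)) (hCD.mul_sqrt_lt_pi hy hc hcpos)
  have hrpow : 0 < h (α * c + (1 - α) * y) ^ (1 / (N - 1)) := by
    nlinarith [rpow_pos_of_pos hcpos (1 / (N - 1)), rpow_nonneg (hCD.1 y hy) (1 / (N - 1))]
  refine (hCD.1 _ hxI).lt_of_ne' fun h₀ => hrpow.ne' ?_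
  rw [h₀, zero_rpow (one_div_pos.2 (sub_pos.2 hN)).ne']

lemma pos {a b : ℝ} (hN : 1 < N) (hCD : IsCDDensity K N h (Ioo a b))
    (hne : ∃ x ∈ Ioo a b, h x ≠ 0) : ∀ x ∈ Ioo a b, 0 < h x := by
  obtain ⟨c, hc, hc₀⟩ := hne
  have hcpos : 0 < h c := (hCD.1 c hc).lt_of_ne' hc₀
  intro x hx
  rcases lt_trichotomy x c with hxc | rfl | hcx
  · obtain ⟨y, hay, hyx⟩ := exists_between hx.1
    refine hCD.pos_of_mem_openSegment hN hc ⟨hay, hyx.trans hx.2⟩ hcpos ?_ hx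
    rw [openSegment_symm, openSegment_eq_Ioo (hyx.trans hxc)]
    exact ⟨hyx, hxc⟩
  · exact hcpos
  · obtain ⟨y, hxy, hyb⟩ := exists_between hx.2
    refine hCD.pos_of_mem_openSegment hN hc ⟨hx.1.trans hxy, hyb⟩ hcpos ?_ hx
    rw [openSegment_eq_Ioo (hcx.trans hxy)]
    exact ⟨hcx, hxy⟩

lemma one_sub_mul_le_rpow (hN : 1 < N) (hCD : IsCDDensity K N h I) {x y r Θ : ℝ} (hr : 0 < r)
    (hrΘ : r ≤ Θ) (hball : closedBall x r ⊆ I) (hxpos : 0 < h x) (hy : |y - x| ≤ r) :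
    (1 - |y - x| / r * cosh (Θ * √(|K| / (N - 1)))) * h x ^ (1 / (N - 1))
      ≤ h y ^ (1 / (N - 1)) := by
  set s := |y - x| / r
  have hs₀ : 0 ≤ s := by positivity
  have hs₁ : s ≤ 1 := (div_le_one hr).2 hy
  obtain ⟨u, hux, hyu⟩ : ∃ u, |u - x| = r ∧ y = (1 - s) * x + (1 - (1 - s)) * u := by
    rcases le_total x y with hxy | hyx
    · refine ⟨x + r, by simp [hr.le], ?_⟩
      simp only [s, abs_of_nonneg (sub_nonneg.2 hxy)]
      field_simp
      ring
    · refine ⟨x - r, by simp [hr.le], ?_⟩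
      simp only [s, abs_of_nonpos (sub_nonpos.2 hyx)]
      field_simp
      ring
  have hxI : x ∈ I := hball (mem_closedBall_self hr.le)
  have huI : u ∈ I := hball (by rw [mem_closedBall, dist_eq, hux])
  have hyI : y ∈ I := hball (by rwa [mem_closedBall, dist_eq])
  have hineq := hCD.sigmaCoeffReal_mul_add_le hN huI hxI
    ⟨sub_nonneg.2 hs₁, sub_le_self 1 hs₀⟩ (hyu ▸ hyI) hxpos
  rw [← hyu] at hineq
  have hθ := hCD.mul_sqrt_lt_pi huI hxI hxpos
  have hσ := one_sub_mul_cosh_le_sigmaCoeffReal (Θ := Θ) (sub_pos.2 hN) (sub_nonneg.2 hs₁)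
    (sub_le_self 1 hs₀) (abs_nonneg (x - u)) (by rw [abs_sub_comm, hux]; exact hrΘ) hθ
  have hτ := sigmaCoeffReal_nonneg (sub_pos.2 hN) (sub_nonneg.2 (sub_le_self 1 hs₀))
    (by linarith) (abs_nonneg (x - u)) hθ
  rw [sub_sub_cancel] at hσ
  calc (1 - s * cosh (Θ * √(|K| / (N - 1)))) * h x ^ (1 / (N - 1))
      ≤ sigmaCoeffReal K (N - 1) (1 - s) |x - u| * h x ^ (1 / (N - 1)) :=
        mul_le_mul_of_nonneg_right hσ (rpow_nonneg hxpos.le _)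
    _ ≤ _ := le_add_of_nonneg_right (mul_nonneg hτ (rpow_nonneg (hCD.1 u huI) _))
    _ ≤ h y ^ (1 / (N - 1)) := hineq

lemma continuousOn_rpow (hN : 1 < N) (hCD : IsCDDensity K N h I) (hI : IsOpen I)
    (hpos : ∀ x ∈ I, 0 < h x) : ContinuousOn (fun x => h x ^ (1 / (N - 1))) I := by
  intro x hx
  obtain ⟨r, hr, hball⟩ := nhds_basis_closedBall.mem_iff.1 (hI.mem_nhds hx)
  set C := cosh (r * √(|K| / (N - 1)))
  set g := fun y => h y ^ (1 / (N - 1))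
  have hlow : ∀ᶠ y in 𝓝 x, (1 - |y - x| / r * C) * g x ≤ g y := by
    filter_upwards [closedBall_mem_nhds x hr] with y hy
    rw [mem_closedBall, dist_eq] at hy
    exact hCD.one_sub_mul_le_rpow hN hr le_rfl hball (hpos x hx) hy
  have hden : ContinuousAt (fun y => 1 - |y - x| / (r / 2) * C) x := by fun_prop
  have hup : ∀ᶠ y in 𝓝 x, g y ≤ g x / (1 - |y - x| / (r / 2) * C) := by
    filter_upwards [closedBall_mem_nhds x (half_pos hr), hden.eventually
      (lt_mem_nhds (show (0 : ℝ) < 1 - |x - x| / (r / 2) * C by simp))] with y hy hden_pos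
    rw [mem_closedBall, dist_eq] at hy
    -- the lower bound with the roles of `x` and `y` exchanged
    have hsub : closedBall y (r / 2) ⊆ I :=
      (closedBall_subset_closedBall' (by rw [dist_eq]; linarith)).trans hball
    have := hCD.one_sub_mul_le_rpow hN (half_pos hr) (half_le_self hr.le) hsub
      (hpos y (hsub (mem_closedBall_self (half_pos hr).le))) (y := x) (by rwa [abs_sub_comm])
    rw [abs_sub_comm x y] at this
    rw [le_div_iff₀ hden_pos]
    linarith
  have hlim_low : Tendsto (fun y => (1 - |y - x| / r * C) * g x) (𝓝 x) (𝓝 (g x)) := by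
    have : ContinuousAt (fun y => (1 - |y - x| / r * C) * g x) x := by fun_prop
    simpa using this.tendsto
  have hlim_up : Tendsto (fun y => g x / (1 - |y - x| / (r / 2) * C)) (𝓝 x)
      (𝓝 (g x)) := by
    have : ContinuousAt (fun y => g x / (1 - |y - x| / (r / 2) * C)) x :=
      continuousAt_const.div hden (by simp)
    simpa using this.tendsto
  exact ContinuousAt.continuousWithinAt
    (tendsto_of_tendsto_of_tendsto_of_le_of_le' hlim_low hlim_up hlow hup)

lemma continuousOn_log (hN : 1 < N) (hCD : IsCDDensity K N h I) (hI : IsOpen I)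
    (hpos : ∀ x ∈ I, 0 < h x) : ContinuousOn (fun x => log (h x)) I := by
  refine ((continuousOn_const (c := N - 1)).mul ((hCD.continuousOn_rpow hN hI hpos).log
    fun x hx => (rpow_pos_of_pos (hpos x hx) _).ne')).congr fun x hx => ?_
  have : N - 1 ≠ 0 := (sub_pos.2 hN).ne'
  show log (h x) = (N - 1) * log (h x ^ (1 / (N - 1)))
  rw [log_rpow (hpos x hx)]
  field_simp

end IsCDDensity

lemma sub_mem_Ioo_of_mem_Icc {a b ε x z : ℝ} (hx : x ∈ Ioo (a + ε) (b - ε))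
    (hz : z ∈ Icc (-ε) ε) : x - z ∈ Ioo a b :=
  ⟨by linarith [hx.1, hz.2], by linarith [hx.2, hz.1]⟩

lemma integral_mul_sub_eq (f ψ : ℝ → ℝ) (x : ℝ) :
    ∫ y, f y * ψ (x - y) = ∫ z, f (x - z) * ψ z := by
  rw [← integral_sub_left_eq_self _ volume x]
  simp only [sub_sub_cancel]

lemma integrable_mul_of_continuousOn {f ψ : ℝ → ℝ} {a b ε x : ℝ} (hf : ContinuousOn f (Ioo a b))
    (hψ : Continuous ψ) (hψsupp : support ψ ⊆ Icc (-ε) ε) (hx : x ∈ Ioo (a + ε) (b - ε)) :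
    Integrable (fun z => f (x - z) * ψ z) := by
  have hcont : ContinuousOn (fun z => f (x - z) * ψ z) (Icc (-ε) ε) :=
    (hf.comp (continuous_sub_left x).continuousOn
      fun z hz => sub_mem_Ioo_of_mem_Icc hx hz).mul hψ.continuousOn
  exact (hcont.integrableOn_compact isCompact_Icc).integrable_of_forall_notMem_eq_zero
    fun z hz => by rw [notMem_support.1 (mt (@hψsupp z) hz), mul_zero]

lemma contDiffOn_integral_mul_sub {f ψ : ℝ → ℝ} {a b ε : ℝ} {n : ℕ∞}
    (hf : ContinuousOn f (Ioo a b)) (hψ : ContDiff ℝ n ψ) (hψsupp : support ψ ⊆ Icc (-ε) ε) :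
    ContDiffOn ℝ n (fun x => ∫ y, f y * ψ (x - y)) (Ioo (a + ε) (b - ε)) := by
  refine contDiffOn_of_locally_contDiffOn fun x₀ hx₀ => ?_
  obtain ⟨c, hac, hcx⟩ := exists_between hx₀.1
  obtain ⟨d, hxd, hdb⟩ := exists_between hx₀.2
  -- for `x ∈ (c, d)` only the values of `f` on the compact `[c - ε, d + ε] ⊆ (a, b)` matter
  set k := Icc (c - ε) (d + ε)
  have hk : k ⊆ Ioo a b := fun y hy => ⟨by linarith [hy.1], by linarith [hy.2]⟩
  have hψc : HasCompactSupport ψ :=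
    HasCompactSupport.intro isCompact_Icc fun z hz => notMem_support.1 (mt (@hψsupp z) hz)
  have hconv : ContDiff ℝ n (convolution (k.indicator f) ψ (ContinuousLinearMap.mul ℝ ℝ) volume) :=
    hψc.contDiff_convolution_right _ (((hf.mono hk).integrableOn_compact
      isCompact_Icc).integrable_indicator measurableSet_Icc).locallyIntegrable hψ
  refine ⟨Ioo c d, isOpen_Ioo, ⟨hcx, hxd⟩, hconv.contDiffOn.congr fun x hx => ?_⟩
  refine integral_congr_ae (Eventually.of_forall fun y => ?_)
  by_cases hy : ψ (x - y) = 0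
  · simp [hy]
  · have hyk : y ∈ k := ⟨by linarith [(hψsupp hy).2, hx.2.1], by linarith [(hψsupp hy).1, hx.2.2]⟩
    simp [indicator_of_mem hyk]

lemma mul_log_div_add_mul_log_div_le_log_add {x y l m : ℝ} (hx : 0 < x) (hy : 0 < y)
    (hl : 0 < l) (hm : 0 < m) (hlm : l + m = 1) :
    l * log (x / l) + m * log (y / m) ≤ log (x + y) := by
  have := strictConcaveOn_log_Ioi.concaveOn.2 (mem_Ioi.2 (div_pos hx hl))
    (mem_Ioi.2 (div_pos hy hm)) hl.le hm.le hlm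
  simpa [smul_eq_mul, mul_div_cancel₀ _ hl.ne', mul_div_cancel₀ _ hm.ne'] using this

/-- Jensen's inequality for the convex function `(u, v) ↦ log (σ eᵘ + τ eᵛ)`. -/
lemma mul_exp_integral_add_mul_exp_integral_le {α : Type*} [MeasurableSpace α] {μ : Measure α}
    {ψ u v w : α → ℝ} {σ τ : ℝ} (hσ : 0 < σ) (hτ : 0 < τ) (hψ : ∀ z, 0 ≤ ψ z)
    (hψint : ∫ z, ψ z ∂μ = 1) (hu : Integrable (fun z => u z * ψ z) μ)
    (hv : Integrable (fun z => v z * ψ z) μ) (hw : Integrable (fun z => w z * ψ z) μ)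
    (hle : ∀ z, ψ z ≠ 0 → σ * exp (u z) + τ * exp (v z) ≤ exp (w z)) :
    σ * exp (∫ z, u z * ψ z ∂μ) + τ * exp (∫ z, v z * ψ z ∂μ) ≤ exp (∫ z, w z * ψ z ∂μ) := by
  set a := ∫ z, u z * ψ z ∂μ
  set b := ∫ z, v z * ψ z ∂μ
  set S := σ * exp a + τ * exp b
  have hS : 0 < S := by positivity
  set l := σ * exp a / S
  set m := τ * exp b / S
  have hlm : l + m = 1 := by rw [← add_div, div_self hS.ne']
  -- the tangent plane of `(u, v) ↦ log (σ eᵘ + τ eᵛ)` at `(a, b)` has slopes `l` and `m`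
  have htangent : ∀ z, ψ z ≠ 0 → log S + l * (u z - a) + m * (v z - b) ≤ w z := by
    intro z hz
    have hconc := mul_log_div_add_mul_log_div_le_log_add (x := σ * exp (u z))
      (y := τ * exp (v z)) (by positivity) (by positivity) (by positivity) (by positivity) hlm
    have hl : σ * exp (u z) / l = exp (u z - a) * S := by
      simp only [l, exp_sub]; field_simp
    have hm : τ * exp (v z) / m = exp (v z - b) * S := by
      simp only [m, exp_sub]; field_simp
    rw [hl, hm, log_mul (exp_pos _).ne' hS.ne', log_mul (exp_pos _).ne' hS.ne', log_exp,
      log_exp] at hconc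
    have hw_ge : log (σ * exp (u z) + τ * exp (v z)) ≤ w z :=
      (log_le_log (by positivity) (hle z hz)).trans (log_exp _).le
    linear_combination hconc + hw_ge - log S * hlm
  have hpt : ∀ z, (log S - l * a - m * b) * ψ z + l * (u z * ψ z) + m * (v z * ψ z)
      ≤ w z * ψ z := by
    intro z
    rcases eq_or_ne (ψ z) 0 with hz | hz
    · simp [hz]
    calc _ = (log S + l * (u z - a) + m * (v z - b)) * ψ z := by ring
      _ ≤ w z * ψ z := mul_le_mul_of_nonneg_right (htangent z hz) (hψ z)
  have hψi : Integrable ψ μ := Integrable.of_integral_ne_zero (by simp [hψint])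
  have hint : ∫ z, ((log S - l * a - m * b) * ψ z + l * (u z * ψ z) + m * (v z * ψ z)) ∂μ
      ≤ ∫ z, w z * ψ z ∂μ :=
    integral_mono (((hψi.const_mul _).add (hu.const_mul l)).add (hv.const_mul m)) hw hpt
  rw [integral_add (by exact (hψi.const_mul _).add (hu.const_mul l)) (hv.const_mul m),
    integral_add (hψi.const_mul _) (hu.const_mul l), integral_const_mul, integral_const_mul,
    integral_const_mul, hψint] at hint
  calc S = exp (log S) := (exp_log hS).symm
    _ ≤ exp (∫ z, w z * ψ z ∂μ) := exp_le_exp.2 (by linarith)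

lemma IsCDDensity.exp_integral_log_mul_sub {K N a b ε : ℝ} {h ψ : ℝ → ℝ} (hN : 1 < N)
    (hCD : IsCDDensity K N h (Ioo a b)) (hpos : ∀ x ∈ Ioo a b, 0 < h x) (hψ : Continuous ψ)
    (hψpos : ∀ x, 0 ≤ ψ x) (hψsupp : support ψ ⊆ Icc (-ε) ε) (hψint : ∫ x, ψ x = 1) :
    IsCDDensity K N (fun x => exp (∫ y, log (h y) * ψ (x - y))) (Ioo (a + ε) (b - ε)) := by
  set p := 1 / (N - 1)
  have hmem : ∀ x ∈ Ioo (a + ε) (b - ε), ∀ z, ψ z ≠ 0 → x - z ∈ Ioo a b :=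
    fun x hx z hz => sub_mem_Ioo_of_mem_Icc hx (hψsupp hz)
  have hint : ∀ x ∈ Ioo (a + ε) (b - ε), Integrable (fun z => p * log (h (x - z)) * ψ z) :=
    fun x hx => by
      simpa only [mul_assoc] using (integrable_mul_of_continuousOn
        (hCD.continuousOn_log hN isOpen_Ioo hpos) hψ hψsupp hx).const_mul p
  have hpow : ∀ x, exp (∫ y, log (h y) * ψ (x - y)) ^ p
      = exp (∫ z, p * log (h (x - z)) * ψ z) := fun x => by
    rw [← exp_mul, integral_mul_sub_eq, mul_comm, ← integral_const_mul]
    simp only [mul_assoc]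
  obtain ⟨z₀, hz₀⟩ : ∃ z, ψ z ≠ 0 := by
    by_contra! hψ₀
    simp [hψ₀] at hψint
  refine ⟨fun _ _ => (exp_pos _).le, fun x₀ hx₀ x₁ hx₁ t ht => ?_⟩
  have hm : t * x₁ + (1 - t) * x₀ ∈ Ioo (a + ε) (b - ε) := by
    simpa using convex_Ioo (a + ε) (b - ε) hx₁ hx₀ ht.1 (sub_nonneg.2 ht.2) (add_sub_cancel t 1)
  have hθ : 0 < K → |x₁ - x₀| * √(K / (N - 1)) < π := by
    simpa using hCD.mul_sqrt_lt_pi (hmem x₀ hx₀ z₀ hz₀) (hmem x₁ hx₁ z₀ hz₀)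
      (hpos _ (hmem x₁ hx₁ z₀ hz₀))
  dsimp only
  rw [sigmaCoeff_mul_add_le_ofReal_iff (sub_pos.2 hN) ht (abs_nonneg _) hθ (by positivity)
    (by positivity) (by positivity), hpow, hpow, hpow]
  rcases ht.1.eq_or_lt with rfl | ht₀
  · simp [sigmaCoeffReal_zero, sigmaCoeffReal_one (sub_pos.2 hN) (abs_nonneg _) hθ]
  rcases ht.2.eq_or_lt with rfl | ht₁
  · simp [sigmaCoeffReal_zero, sigmaCoeffReal_one (sub_pos.2 hN) (abs_nonneg _) hθ]
  refine mul_exp_integral_add_mul_exp_integral_le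
    (sigmaCoeffReal_pos (sub_pos.2 hN) ht₀ ht₁.le (abs_nonneg _) hθ)
    (sigmaCoeffReal_pos (sub_pos.2 hN) (sub_pos.2 ht₁) (sub_le_self 1 ht₀.le) (abs_nonneg _) hθ)
    hψpos hψint (hint x₁ hx₁) (hint x₀ hx₀) (hint _ hm) fun z hz => ?_
  have hmz : t * (x₁ - z) + (1 - t) * (x₀ - z) = t * x₁ + (1 - t) * x₀ - z := by ring
  have hineq := hCD.sigmaCoeffReal_mul_add_le hN (hmem x₀ hx₀ z hz) (hmem x₁ hx₁ z hz) ht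
    (hmz ▸ hmem _ hm z hz) (hpos _ (hmem x₁ hx₁ z hz))
  rwa [hmz, sub_sub_sub_cancel_right, rpow_def_of_pos (hpos _ (hmem x₁ hx₁ z hz)),
    rpow_def_of_pos (hpos _ (hmem x₀ hx₀ z hz)), rpow_def_of_pos (hpos _ (hmem _ hm z hz)),
    mul_comm (log _), mul_comm (log _), mul_comm (log _)] at hineq

theorem statement18_general (K N a b ε : ℝ) (hN : 1 < N)
    (h : ℝ → ℝ) (hCD : IsCDDensity K N h (Set.Ioo a b))
    (hne : ∃ x ∈ Set.Ioo a b, h x ≠ 0)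
    (ψ : ℝ → ℝ) (hψ : ContDiff ℝ 2 ψ) (hψpos : ∀ x, 0 ≤ ψ x)
    (hψsupp : Function.support ψ ⊆ Set.Icc (-ε) ε)
    (hψint : ∫ x, ψ x = 1) :
    ContDiffOn ℝ 2 (fun x => Real.exp (∫ y, Real.log (h y) * ψ (x - y)))
        (Set.Ioo (a + ε) (b - ε)) ∧
      IsCDDensity K N (fun x => Real.exp (∫ y, Real.log (h y) * ψ (x - y)))
        (Set.Ioo (a + ε) (b - ε)) := by
  have hpos := hCD.pos hN hne
  have hlog := hCD.continuousOn_log hN isOpen_Ioo hpos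
  exact ⟨contDiff_exp.comp_contDiffOn (contDiffOn_integral_mul_sub (n := 2) hlog hψ hψsupp),
    hCD.exp_integral_log_mul_sub hN hpos hψ.continuous hψpos hψsupp hψint⟩

/-- Logarithmic mollification of a `CD(K,N)` density: if `h` is a `CD(K,N)` density on
`(a,b)` (not identically zero), `0 < ε < (b-a)/2`, and `ψ` is a nonnegative `C²` mollifier
supported in `[-ε,ε]` with `∫ψ = 1`, then `h^ε` defined by
`log h^ε(x) = ∫ log h(y)·ψ(x-y) dy` is a `C²`-smooth `CD(K,N)` density on `(a+ε,b-ε)`. -/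
theorem statement18 (K N a b ε : ℝ) (hN : 1 < N)
    (hε : 0 < ε) (hε2 : ε < (b - a) / 2)
    (h : ℝ → ℝ) (hCD : IsCDDensity K N h (Set.Ioo a b))
    (hne : ∃ x ∈ Set.Ioo a b, h x ≠ 0)
    (ψ : ℝ → ℝ) (hψ : ContDiff ℝ 2 ψ) (hψpos : ∀ x, 0 ≤ ψ x)
    (hψsupp : Function.support ψ ⊆ Set.Icc (-ε) ε)
    (hψint : ∫ x, ψ x = 1) :
    ContDiffOn ℝ 2 (fun x => Real.exp (∫ y, Real.log (h y) * ψ (x - y)))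
        (Set.Ioo (a + ε) (b - ε)) ∧
      IsCDDensity K N (fun x => Real.exp (∫ y, Real.log (h y) * ψ (x - y)))
        (Set.Ioo (a + ε) (b - ε)) :=
  statement18_general K N a b ε hN h hCD hne ψ hψ hψpos hψsupp hψint
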